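/- arXiv:2002.00425 — 5 statements merged into one kernel-verified Lean document; each statement's English description precedes it below -/
import Mathlib

section
/- Assume the Gram matrix G is invertible, all functions ξ¹, …, ξⁿ are measurable, and let η := Σ_{j=1}^n a_j ξ^j for some a ∈ ℝⁿ. Let ω ⊆ ℝ^d be a Lebesgue-measurable set, and let u : ℝ^d → ℝ be measurable such that u − η and each least-squares basis function ξ̃ˡ are square-integrable on ω. Then the local least-squares error function u − Σ_{l=1}^m u(x_l) ξ̃ˡ is square-integrable on ω and satisfies the bound ‖u − Σ_{l=1}^m u(x_l) ξ̃ˡ‖_{L²(ω)} ≤ ‖u − η‖_{L²(ω)} + Σ_{l=1}^m |u(x_l) − η(x_l)| · ‖ξ̃ˡ‖_{L²(ω)}. -/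
open Matrix MeasureTheory

/-!
The least-squares basis reproduces the span of the `ξʲ`: since `G a = ∑ₗ η(xₗ) Q(xₗ)` for
`η = Q ⬝ a`, we get `∑ₗ η(xₗ) ξ̃ˡ(y) = Q(y) ⬝ G⁻¹ G a = η(y)`. Hence the error equals
`(u - η) - ∑ₗ (u(xₗ) - η(xₗ)) ξ̃ˡ`, and the bound is the triangle inequality in `L²(ω)`.
-/

section LeastSquares

variable {X ι κ R : Type*} [Fintype ι] [Fintype κ] [CommRing R]

def gramMatrix (Q : X → κ → R) (x : ι → X) : Matrix κ κ R :=
  ∑ l, vecMulVec (Q (x l)) (Q (x l))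

theorem gramMatrix_mulVec (Q : X → κ → R) (x : ι → X) (a : κ → R) :
    gramMatrix Q x *ᵥ a = ∑ l, (Q (x l) ⬝ᵥ a) • Q (x l) := by
  simp only [gramMatrix, sum_mulVec, vecMulVec_mulVec, op_smul_eq_smul]

variable [DecidableEq κ]

noncomputable def leastSquaresBasis (Q : X → κ → R) (x : ι → X) (l : ι) (y : X) : R :=
  Q y ⬝ᵥ ((gramMatrix Q x)⁻¹ *ᵥ Q (x l))

theorem sum_mul_leastSquaresBasis {Q : X → κ → R} {x : ι → X} (hG : IsUnit (gramMatrix Q x))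
    (a : κ → R) (y : X) :
    ∑ l, (Q (x l) ⬝ᵥ a) * leastSquaresBasis Q x l y = Q y ⬝ᵥ a := by
  have hdet : IsUnit (gramMatrix Q x).det := (isUnit_iff_isUnit_det _).mp hG
  calc ∑ l, (Q (x l) ⬝ᵥ a) * leastSquaresBasis Q x l y
      = Q y ⬝ᵥ ((gramMatrix Q x)⁻¹ *ᵥ (gramMatrix Q x *ᵥ a)) := by
        simp only [leastSquaresBasis, gramMatrix_mulVec, mulVec_sum, mulVec_smul, dotProduct_sum,
          dotProduct_smul, smul_eq_mul]
    _ = Q y ⬝ᵥ a := by rw [mulVec_mulVec, nonsing_inv_mul _ hdet, one_mulVec]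

theorem sub_sum_mul_leastSquaresBasis {Q : X → κ → R} {x : ι → X}
    (hG : IsUnit (gramMatrix Q x)) (a : κ → R) (u : X → R) (y : X) :
    u y - ∑ l, u (x l) * leastSquaresBasis Q x l y =
      (u y - Q y ⬝ᵥ a) - ∑ l, (u (x l) - Q (x l) ⬝ᵥ a) * leastSquaresBasis Q x l y := by
  simp only [sub_mul, Finset.sum_sub_distrib, sum_mul_leastSquaresBasis hG]
  ring

end LeastSquares

theorem eLpNorm_sub_sum_smul_le {α ι 𝕜 E : Type*} [MeasurableSpace α] {μ : Measure α}
    {p : ENNReal} [NormedDivisionRing 𝕜] [NormedAddCommGroup E] [Module 𝕜 E] [NormSMulClass 𝕜 E]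
    {s : Finset ι} {f : α → E} {g : ι → α → E} (hf : AEStronglyMeasurable f μ)
    (hg : ∀ l ∈ s, AEStronglyMeasurable (g l) μ) (hp : 1 ≤ p) (c : ι → 𝕜) :
    eLpNorm (f - ∑ l ∈ s, c l • g l) p μ ≤ eLpNorm f p μ + ∑ l ∈ s, ‖c l‖ₑ * eLpNorm (g l) p μ := by
  have hcg : ∀ l ∈ s, AEStronglyMeasurable (c l • g l) μ := fun l hl => (hg l hl).const_smul _
  calc eLpNorm (f - ∑ l ∈ s, c l • g l) p μ
      ≤ eLpNorm f p μ + eLpNorm (∑ l ∈ s, c l • g l) p μ :=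
        eLpNorm_sub_le hf (Finset.aestronglyMeasurable_sum _ hcg) hp
    _ ≤ eLpNorm f p μ + ∑ l ∈ s, eLpNorm (c l • g l) p μ := by
        gcongr; exact eLpNorm_sum_le hcg hp
    _ = eLpNorm f p μ + ∑ l ∈ s, ‖c l‖ₑ * eLpNorm (g l) p μ := by
        simp only [eLpNorm_const_smul]

theorem cgfem_local_L2_bound_general {d n m : ℕ}
    (ξ : Fin n → EuclideanSpace ℝ (Fin d) → ℝ)
    (x : Fin m → EuclideanSpace ℝ (Fin d))
    (Q : EuclideanSpace ℝ (Fin d) → Fin n → ℝ)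
    (hQ : ∀ y j, Q y j = ξ j y)
    (G : Matrix (Fin n) (Fin n) ℝ)
    (hG : G = ∑ l, vecMulVec (Q (x l)) (Q (x l)))
    (hinv : IsUnit G)
    (ξt : Fin m → EuclideanSpace ℝ (Fin d) → ℝ)
    (hξt : ∀ l y, ξt l y = Q y ⬝ᵥ (G⁻¹ *ᵥ Q (x l)))
    (a : Fin n → ℝ)
    (η : EuclideanSpace ℝ (Fin d) → ℝ)
    (hη : ∀ y, η y = ∑ j, a j * ξ j y)
    (ω : Set (EuclideanSpace ℝ (Fin d)))
    (u : EuclideanSpace ℝ (Fin d) → ℝ)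
    (hL2 : MemLp (fun y => u y - η y) 2 (volume.restrict ω))
    (hL2' : ∀ l, MemLp (ξt l) 2 (volume.restrict ω)) :
    MemLp (fun y => u y - ∑ l, u (x l) * ξt l y) 2 (volume.restrict ω) ∧
    eLpNorm (fun y => u y - ∑ l, u (x l) * ξt l y) 2 (volume.restrict ω) ≤
      eLpNorm (fun y => u y - η y) 2 (volume.restrict ω) +
      ∑ l, ENNReal.ofReal |u (x l) - η (x l)| * eLpNorm (ξt l) 2 (volume.restrict ω) := by
  subst hG
  have hξt : ξt = leastSquaresBasis Q x := funext₂ hξt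
  have hη : η = fun y => Q y ⬝ᵥ a := funext fun y => by
    simp only [hη, hQ, dotProduct, mul_comm]
  have herr : (fun y => u y - ∑ l, u (x l) * ξt l y) =
      (fun y => u y - η y) - ∑ l, (u (x l) - η (x l)) • ξt l := by
    ext y
    simp only [hξt, hη, sub_sum_mul_leastSquaresBasis hinv a u y, Pi.sub_apply, Finset.sum_apply,
      Pi.smul_apply, smul_eq_mul]
  rw [herr]
  refine ⟨hL2.sub (memLp_finsetSum' _ fun l _ => (hL2' l).const_smul _), ?_⟩
  simpa only [Real.enorm_eq_ofReal_abs] using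
    eLpNorm_sub_sum_smul_le hL2.1 (fun l _ => (hL2' l).1) one_le_two (fun l => u (x l) - η (x l))

/-- L² bound for the local least-squares approximation error.
With `G` invertible, `η = Σ_j a_j ξ^j`, `ω` measurable, `u` measurable, and
`u − η` and the least-squares basis functions `ξ̃ˡ` square-integrable on `ω`,
the function `u − Σ_l u(x_l) ξ̃ˡ` is square-integrable on `ω` and
`‖u − Σ_l u(x_l) ξ̃ˡ‖_{L²(ω)} ≤ ‖u − η‖_{L²(ω)} + Σ_l |u(x_l) − η(x_l)| ‖ξ̃ˡ‖_{L²(ω)}`. -/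
theorem cgfem_local_L2_bound {d n m : ℕ}
    (ξ : Fin n → EuclideanSpace ℝ (Fin d) → ℝ)
    (hmeas : ∀ j, Measurable (ξ j))
    (x : Fin m → EuclideanSpace ℝ (Fin d))
    (Q : EuclideanSpace ℝ (Fin d) → Fin n → ℝ)
    (hQ : ∀ y j, Q y j = ξ j y)
    (G : Matrix (Fin n) (Fin n) ℝ)
    (hG : G = ∑ l, vecMulVec (Q (x l)) (Q (x l)))
    (hinv : IsUnit G)
    (ξt : Fin m → EuclideanSpace ℝ (Fin d) → ℝ)
    (hξt : ∀ l y, ξt l y = Q y ⬝ᵥ (G⁻¹ *ᵥ Q (x l)))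
    (a : Fin n → ℝ)
    (η : EuclideanSpace ℝ (Fin d) → ℝ)
    (hη : ∀ y, η y = ∑ j, a j * ξ j y)
    (ω : Set (EuclideanSpace ℝ (Fin d)))
    (hω : MeasurableSet ω)
    (u : EuclideanSpace ℝ (Fin d) → ℝ)
    (hu : Measurable u)
    (hL2 : MemLp (fun y => u y - η y) 2 (volume.restrict ω))
    (hL2' : ∀ l, MemLp (ξt l) 2 (volume.restrict ω)) :
    MemLp (fun y => u y - ∑ l, u (x l) * ξt l y) 2 (volume.restrict ω) ∧
    eLpNorm (fun y => u y - ∑ l, u (x l) * ξt l y) 2 (volume.restrict ω) ≤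
      eLpNorm (fun y => u y - η y) 2 (volume.restrict ω) +
      ∑ l, ENNReal.ofReal |u (x l) - η (x l)| * eLpNorm (ξt l) 2 (volume.restrict ω) :=
  cgfem_local_L2_bound_general ξ x Q hQ G hG hinv ξt hξt a η hη ω u hL2 hL2'
end

section
/- Assume the Gram matrix G is invertible and each ξ^j is differentiable on ℝ^d (so each least-squares basis function ξ̃ˡ is differentiable), and let η := Σ_{j=1}^n a_j ξ^j for some a ∈ ℝⁿ. Let ω ⊆ ℝ^d be a Lebesgue-measurable set and let u : ℝ^d → ℝ be differentiable, with ‖D(u−η)‖ and each ‖Dξ̃ˡ‖ square-integrable on ω (D denoting the Fréchet derivative). Then (∫_ω ‖D(u − Σ_{l=1}^m u(x_l) ξ̃ˡ)(x)‖² dx)^{1/2} ≤ (∫_ω ‖D(u − η)(x)‖² dx)^{1/2} + Σ_{l=1}^m |u(x_l) − η(x_l)| · (∫_ω ‖Dξ̃ˡ(x)‖² dx)^{1/2}. -/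
/-!
Least squares reproduces the span of the `ξʲ`: since `Σₗ Q(xₗ) Q(xₗ)ᵀ a = G a`, the coefficients
`G⁻¹ Σₗ η(xₗ) Q(xₗ)` of `Σₗ η(xₗ) ξ̃ˡ` are exactly `a`, so `Σₗ η(xₗ) ξ̃ˡ = η`. Hence
`u - Σₗ u(xₗ) ξ̃ˡ = (u - η) + Σₗ (η(xₗ) - u(xₗ)) ξ̃ˡ`, and the bound is Minkowski's inequality in
`L²(ω)` applied to the derivative of this sum.
-/

open Matrix MeasureTheory

section LeastSquares

variable {ι κ R : Type*} [Fintype ι] [Fintype κ] [CommRing R]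

theorem sum_vecMulVec_self_mulVec (v : ι → κ → R) (a : κ → R) :
    (∑ l, vecMulVec (v l) (v l)) *ᵥ a = ∑ l, (v l ⬝ᵥ a) • v l := by
  simp only [sum_mulVec, vecMulVec_mulVec, op_smul_eq_smul]

theorem sum_dotProduct_smul_inv_sum_vecMulVec_mulVec [DecidableEq κ] (v : ι → κ → R)
    (hG : IsUnit (∑ l, vecMulVec (v l) (v l))) (a : κ → R) :
    ∑ l, (v l ⬝ᵥ a) • ((∑ k, vecMulVec (v k) (v k))⁻¹ *ᵥ v l) = a := by
  simp_rw [← mulVec_smul, ← mulVec_sum, ← sum_vecMulVec_self_mulVec, mulVec_mulVec,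
    nonsing_inv_mul _ ((isUnit_iff_isUnit_det _).mp hG), one_mulVec]

end LeastSquares

section LpNorm

variable {α E : Type*} [MeasurableSpace α] {μ : Measure α} [NormedAddCommGroup E]

theorem sqrt_integral_norm_sq_eq_lpNorm {f : α → E} (hf : AEStronglyMeasurable f μ) :
    Real.sqrt (∫ y, ‖f y‖ ^ 2 ∂μ) = lpNorm f 2 μ := by
  rw [lpNorm_eq_integral_norm_rpow_toReal two_ne_zero ENNReal.ofNat_ne_top hf,
    Real.sqrt_eq_rpow]
  norm_num

theorem lpNorm_add_sum_smul_le {𝕜 ι : Type*} [NormedField 𝕜] [NormedSpace 𝕜 E] {p : ENNReal}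
    (hp : 1 ≤ p) (f : α → E) {s : Finset ι} {g : ι → α → E} (hg : ∀ i ∈ s, MemLp (g i) p μ)
    (c : ι → 𝕜) :
    lpNorm (f + ∑ i ∈ s, c i • g i) p μ ≤ lpNorm f p μ + ∑ i ∈ s, ‖c i‖ * lpNorm (g i) p μ := by
  have hcg : ∀ i ∈ s, MemLp (c i • g i) p μ := fun i hi => (hg i hi).const_smul (c i)
  calc lpNorm (f + ∑ i ∈ s, c i • g i) p μ
      ≤ lpNorm f p μ + lpNorm (∑ i ∈ s, c i • g i) p μ :=
        lpNorm_add_le' (memLp_finsetSum' s hcg) hp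
    _ ≤ lpNorm f p μ + ∑ i ∈ s, ‖c i‖ * lpNorm (g i) p μ := by
        grw [lpNorm_sum_le hcg hp]
        simp only [lpNorm_const_smul, coe_nnnorm, le_refl]

end LpNorm

theorem fderiv_add_sum_const_mul {𝕜 E ι : Type*} [NontriviallyNormedField 𝕜]
    [NormedAddCommGroup E] [NormedSpace 𝕜 E] {f : E → 𝕜} {g : ι → E → 𝕜} {y : E}
    (hf : DifferentiableAt 𝕜 f y) (s : Finset ι) (hg : ∀ i ∈ s, DifferentiableAt 𝕜 (g i) y)
    (c : ι → 𝕜) :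
    fderiv 𝕜 (fun z => f z + ∑ i ∈ s, c i * g i z) y
      = fderiv 𝕜 f y + ∑ i ∈ s, c i • fderiv 𝕜 (g i) y := by
  rw [fderiv_fun_add hf (DifferentiableAt.fun_sum fun i hi => (hg i hi).const_mul (c i)),
    fderiv_fun_sum fun i hi => (hg i hi).const_mul (c i)]
  congr 1
  exact Finset.sum_congr rfl fun i hi => fderiv_const_mul (hg i hi) (c i)

theorem cgfem_local_H1_bound_general {d n m : ℕ}
    (ξ : Fin n → EuclideanSpace ℝ (Fin d) → ℝ)
    (hdiff : ∀ j, Differentiable ℝ (ξ j))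
    (x : Fin m → EuclideanSpace ℝ (Fin d))
    (Q : EuclideanSpace ℝ (Fin d) → Fin n → ℝ)
    (hQ : ∀ y j, Q y j = ξ j y)
    (G : Matrix (Fin n) (Fin n) ℝ)
    (hG : G = ∑ l, vecMulVec (Q (x l)) (Q (x l)))
    (hinv : IsUnit G)
    (ξt : Fin m → EuclideanSpace ℝ (Fin d) → ℝ)
    (hξt : ∀ l y, ξt l y = Q y ⬝ᵥ (G⁻¹ *ᵥ Q (x l)))
    (a : Fin n → ℝ)
    (η : EuclideanSpace ℝ (Fin d) → ℝ)
    (hη : ∀ y, η y = ∑ j, a j * ξ j y)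
    (ω : Set (EuclideanSpace ℝ (Fin d)))
    (u : EuclideanSpace ℝ (Fin d) → ℝ)
    (hu : Differentiable ℝ u)
    (hint' : ∀ l, IntegrableOn (fun y => ‖fderiv ℝ (ξt l) y‖ ^ 2) ω) :
    Real.sqrt (∫ y in ω, ‖fderiv ℝ (fun z => u z - ∑ l, u (x l) * ξt l z) y‖ ^ 2) ≤
      Real.sqrt (∫ y in ω, ‖fderiv ℝ (fun z => u z - η z) y‖ ^ 2) +
      ∑ l, |u (x l) - η (x l)| * Real.sqrt (∫ y in ω, ‖fderiv ℝ (ξt l) y‖ ^ 2) := by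
  have hηQ : ∀ y, η y = Q y ⬝ᵥ a := fun y => by simp [hη, hQ, dotProduct, mul_comm]
  have hηd : Differentiable ℝ η := by simp_rw [funext hη]; fun_prop
  have hξtd : ∀ l, Differentiable ℝ (ξt l) := fun l => by
    simp_rw [funext (hξt l), dotProduct, hQ]; fun_prop
  have hrepr : ∀ z, ∑ l, η (x l) * ξt l z = η z := fun z => by
    simp_rw [hξt, hηQ, ← smul_eq_mul, ← dotProduct_smul, ← dotProduct_sum, hG,
      sum_dotProduct_smul_inv_sum_vecMulVec_mulVec _ (hG ▸ hinv)]
  have hsplit : fderiv ℝ (fun z => u z - ∑ l, u (x l) * ξt l z) =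
      fderiv ℝ (fun z => u z - η z) + ∑ l, (η (x l) - u (x l)) • fderiv ℝ (ξt l) := by
    ext1 y
    have hdecomp : (fun z => u z - ∑ l, u (x l) * ξt l z) =
        fun z => (u z - η z) + ∑ l, (η (x l) - u (x l)) * ξt l z := by
      funext z; simp only [sub_mul, Finset.sum_sub_distrib, hrepr]; ring
    rw [hdecomp, fderiv_add_sum_const_mul (f := fun z => u z - η z) ((hu y).sub (hηd y)) _
      fun l _ => hξtd l y]
    simp only [Pi.add_apply, Finset.sum_apply, Pi.smul_apply]
  have hmeas : ∀ f : EuclideanSpace ℝ (Fin d) → ℝ,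
      AEStronglyMeasurable (fderiv ℝ f) (volume.restrict ω) :=
    fun f => (measurable_fderiv ℝ f).aestronglyMeasurable
  simp_rw [sqrt_integral_norm_sq_eq_lpNorm (hmeas _), hsplit, ← Real.norm_eq_abs, norm_sub_rev]
  exact lpNorm_add_sum_smul_le one_le_two _
    (fun l _ => (memLp_two_iff_integrable_sq_norm (hmeas _)).mpr (hint' l)) _

/-- H¹-seminorm bound for the local least-squares approximation error.
With `G` invertible, the `ξ^j` differentiable, `η = Σ_j a_j ξ^j`, `u` differentiable,
and the squared norms of `D(u−η)` and of each `Dξ̃ˡ` integrable on `ω`: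
`(∫_ω ‖D(u − Σ_l u(x_l) ξ̃ˡ)‖²)^{1/2} ≤ (∫_ω ‖D(u−η)‖²)^{1/2}
  + Σ_l |u(x_l) − η(x_l)| (∫_ω ‖Dξ̃ˡ‖²)^{1/2}`. -/
theorem cgfem_local_H1_bound {d n m : ℕ}
    (ξ : Fin n → EuclideanSpace ℝ (Fin d) → ℝ)
    (hdiff : ∀ j, Differentiable ℝ (ξ j))
    (x : Fin m → EuclideanSpace ℝ (Fin d))
    (Q : EuclideanSpace ℝ (Fin d) → Fin n → ℝ)
    (hQ : ∀ y j, Q y j = ξ j y)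
    (G : Matrix (Fin n) (Fin n) ℝ)
    (hG : G = ∑ l, vecMulVec (Q (x l)) (Q (x l)))
    (hinv : IsUnit G)
    (ξt : Fin m → EuclideanSpace ℝ (Fin d) → ℝ)
    (hξt : ∀ l y, ξt l y = Q y ⬝ᵥ (G⁻¹ *ᵥ Q (x l)))
    (a : Fin n → ℝ)
    (η : EuclideanSpace ℝ (Fin d) → ℝ)
    (hη : ∀ y, η y = ∑ j, a j * ξ j y)
    (ω : Set (EuclideanSpace ℝ (Fin d)))
    (hω : MeasurableSet ω)
    (u : EuclideanSpace ℝ (Fin d) → ℝ)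
    (hu : Differentiable ℝ u)
    (hint : IntegrableOn (fun y => ‖fderiv ℝ (fun z => u z - η z) y‖ ^ 2) ω)
    (hint' : ∀ l, IntegrableOn (fun y => ‖fderiv ℝ (ξt l) y‖ ^ 2) ω) :
    Real.sqrt (∫ y in ω, ‖fderiv ℝ (fun z => u z - ∑ l, u (x l) * ξt l z) y‖ ^ 2) ≤
      Real.sqrt (∫ y in ω, ‖fderiv ℝ (fun z => u z - η z) y‖ ^ 2) +
      ∑ l, |u (x l) - η (x l)| * Real.sqrt (∫ y in ω, ‖fderiv ℝ (ξt l) y‖ ^ 2) :=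
  cgfem_local_H1_bound_general ξ hdiff x Q hQ G hG hinv ξt hξt a η hη ω u hu hint'
end

section
/- Let the partition-of-unity setup hold, and let u : ℝ^d → ℝ and η_i : ℝ^d → ℝ (i ∈ I) be measurable functions with u − η_i square-integrable on Ω ∩ ω_i for each i. Then ∫_Ω (u − Σ_{i∈I} N_i η_i)² dx ≤ κ C₁² Σ_{i∈I} ∫_{Ω∩ω_i} (u − η_i)² dx. -/
/-!
On `Ω` the partition of unity gives `u - ∑ Nᵢ ηᵢ = ∑ Nᵢ (u - ηᵢ)`. At each point at most `κ` of
the `Nᵢ` are nonzero and each is bounded by `C₁`, so Cauchy–Schwarz over the active indices gives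
`(u - ∑ Nᵢ ηᵢ)² ≤ κ C₁² ∑ᵢ 1_{ωᵢ} (u - ηᵢ)²` pointwise on `Ω`; integrate over `Ω`.
-/

open MeasureTheory

section Pointwise

variable {ι : Type*} [Fintype ι]

theorem sub_sum_mul_eq_sum_mul_sub (a η : ι → ℝ) (u : ℝ) (ha : ∑ i, a i = 1) :
    u - ∑ i, a i * η i = ∑ i, a i * (u - η i) := by
  simp only [mul_sub, Finset.sum_sub_distrib, ← Finset.sum_mul, ha, one_mul]

theorem sq_sum_mul_le_of_support_subset (a v : ι → ℝ) (s : Finset ι) (C : ℝ) (κ : ℕ)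
    (ha : ∀ i ∉ s, a i = 0) (hC : ∀ i ∈ s, |a i| ≤ C) (hs : s.card ≤ κ) :
    (∑ i, a i * v i) ^ 2 ≤ κ * C ^ 2 * ∑ i ∈ s, v i ^ 2 := by
  have hsum : ∑ i ∈ s, a i * v i = ∑ i, a i * v i :=
    Finset.sum_subset (Finset.subset_univ s) fun i _ hi => by rw [ha i hi, zero_mul]
  have hterm : ∀ i ∈ s, (a i * v i) ^ 2 ≤ C ^ 2 * v i ^ 2 := fun i hi => by
    rw [mul_pow, ← sq_abs (a i)]
    gcongr
    exact hC i hi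
  calc (∑ i, a i * v i) ^ 2 = (∑ i ∈ s, a i * v i) ^ 2 := by rw [hsum]
    _ ≤ s.card * ∑ i ∈ s, (a i * v i) ^ 2 := sq_sum_le_card_mul_sum_sq
    _ ≤ κ * ∑ i ∈ s, C ^ 2 * v i ^ 2 := by
        gcongr with i hi
        exact hterm i hi
    _ = κ * C ^ 2 * ∑ i ∈ s, v i ^ 2 := by rw [← Finset.mul_sum, mul_assoc]

variable {α : Type*} (N η : ι → α → ℝ) (ω : ι → Set α) (u : α → ℝ)

theorem sq_sub_sum_mul_le_of_partitionOfUnity (C : ℝ) (κ : ℕ) (x : α)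
    (hPU : ∑ i, N i x = 1) (hsupp : ∀ i, x ∉ ω i → N i x = 0) (hNbd : ∀ i, |N i x| ≤ C)
    (hoverlap : ({i | x ∈ ω i} : Set ι).ncard ≤ κ) :
    (u x - ∑ i, N i x * η i x) ^ 2 ≤
      κ * C ^ 2 * ∑ i, (ω i).indicator (fun y => (u y - η i y) ^ 2) x := by
  classical
  set s : Finset ι := {i | x ∈ ω i}
  have hcard : s.card ≤ κ := by
    simpa [s, ← Set.ncard_coe_finset] using hoverlap
  have hactive : ∑ i ∈ s, (u x - η i x) ^ 2 =
      ∑ i, (ω i).indicator (fun y => (u y - η i y) ^ 2) x := by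
    simp only [s, Finset.sum_filter, Set.indicator_apply]
  rw [sub_sum_mul_eq_sum_mul_sub _ _ _ hPU, ← hactive]
  exact sq_sum_mul_le_of_support_subset _ _ s C κ (fun i hi => hsupp i (by simpa [s] using hi))
    (fun i _ => hNbd i) hcard

end Pointwise

theorem pu_L2_estimate_general {d : ℕ} {ι : Type*} [Fintype ι]
    (Ω : Set (EuclideanSpace ℝ (Fin d))) (hΩ : IsOpen Ω)
    (C₁ : ℝ)
    (κ : ℕ)
    (N : ι → EuclideanSpace ℝ (Fin d) → ℝ)
    (hPU : ∀ x ∈ Ω, ∑ i, N i x = 1)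
    (ω : ι → Set (EuclideanSpace ℝ (Fin d)))
    (hωmeas : ∀ i, MeasurableSet (ω i))
    (hsupp : ∀ i, ∀ x ∉ ω i, N i x = 0 ∧ fderiv ℝ (N i) x = 0)
    (hNbd : ∀ i x, |N i x| ≤ C₁)
    (hoverlap : ∀ x ∈ Ω, ({i | x ∈ ω i} : Set ι).ncard ≤ κ)
    (u : EuclideanSpace ℝ (Fin d) → ℝ)
    (η : ι → EuclideanSpace ℝ (Fin d) → ℝ)
    (hint : ∀ i, IntegrableOn (fun x => (u x - η i x) ^ 2) (Ω ∩ ω i)) :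
    ∫ x in Ω, (u x - ∑ i, N i x * η i x) ^ 2 ≤
      (κ : ℝ) * C₁ ^ 2 * ∑ i, ∫ x in Ω ∩ ω i, (u x - η i x) ^ 2 := by
  have hpiece : ∀ i, IntegrableOn ((ω i).indicator fun y => (u y - η i y) ^ 2) Ω := fun i => by
    rw [integrableOn_indicator_iff (hωmeas i), Set.inter_comm]
    exact hint i
  have hpointwise : ∀ x ∈ Ω, (u x - ∑ i, N i x * η i x) ^ 2 ≤
      κ * C₁ ^ 2 * ∑ i, (ω i).indicator (fun y => (u y - η i y) ^ 2) x := fun x hx =>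
    sq_sub_sum_mul_le_of_partitionOfUnity N η ω u C₁ κ x (hPU x hx) (fun i hi => (hsupp i x hi).1)
      (fun i => hNbd i x) (hoverlap x hx)
  calc ∫ x in Ω, (u x - ∑ i, N i x * η i x) ^ 2
      ≤ ∫ x in Ω, κ * C₁ ^ 2 * ∑ i, (ω i).indicator (fun y => (u y - η i y) ^ 2) x :=
        integral_mono_of_nonneg (ae_of_all _ fun _ => sq_nonneg _)
          ((integrable_finsetSum _ fun i _ => hpiece i).const_mul _)
          (ae_restrict_of_forall_mem hΩ.measurableSet hpointwise)
    _ = κ * C₁ ^ 2 * ∑ i, ∫ x in Ω ∩ ω i, (u x - η i x) ^ 2 := by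
        rw [integral_const_mul, integral_finsetSum _ fun i _ => hpiece i]
        simp only [setIntegral_indicator (hωmeas _)]

/-- L² estimate for partition-of-unity pasting.
In the partition-of-unity setup, for measurable `u` and `η_i` with `u − η_i`
square-integrable on `Ω ∩ ω_i`,
`∫_Ω (u − Σ_i N_i η_i)² ≤ κ C₁² Σ_i ∫_{Ω∩ω_i} (u−η_i)²`. -/
theorem pu_L2_estimate {d : ℕ} {ι : Type*} [Fintype ι]
    (Ω : Set (EuclideanSpace ℝ (Fin d))) (hΩ : IsOpen Ω)
    (h C₁ C₂ : ℝ) (hh : 0 < h) (hC₁ : 0 < C₁) (hC₂ : 0 < C₂)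
    (κ : ℕ) (hκ : 0 < κ)
    (N : ι → EuclideanSpace ℝ (Fin d) → ℝ)
    (hNdiff : ∀ i, Differentiable ℝ (N i))
    (hPU : ∀ x ∈ Ω, ∑ i, N i x = 1)
    (ω : ι → Set (EuclideanSpace ℝ (Fin d)))
    (hωmeas : ∀ i, MeasurableSet (ω i))
    (hsupp : ∀ i, ∀ x ∉ ω i, N i x = 0 ∧ fderiv ℝ (N i) x = 0)
    (hNbd : ∀ i x, |N i x| ≤ C₁)
    (hDNbd : ∀ i x, ‖fderiv ℝ (N i) x‖ ≤ C₂ / h)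
    (hoverlap : ∀ x ∈ Ω, ({i | x ∈ ω i} : Set ι).ncard ≤ κ)
    (u : EuclideanSpace ℝ (Fin d) → ℝ) (hu : Measurable u)
    (η : ι → EuclideanSpace ℝ (Fin d) → ℝ) (hη : ∀ i, Measurable (η i))
    (hint : ∀ i, IntegrableOn (fun x => (u x - η i x) ^ 2) (Ω ∩ ω i)) :
    ∫ x in Ω, (u x - ∑ i, N i x * η i x) ^ 2 ≤
      (κ : ℝ) * C₁ ^ 2 * ∑ i, ∫ x in Ω ∩ ω i, (u x - η i x) ^ 2 :=
  pu_L2_estimate_general Ω hΩ C₁ κ N hPU ω hωmeas hsupp hNbd hoverlap u η hint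
end

section
/- For every σ with 0 ≤ σ < 1/2 and every integer l ≥ 2, the extension Q̂ : ℝ → ℝ of the flat-top function, defined by Q̂(ξ) = 1 for ξ ≤ −1+2σ, Q̂(ξ) = (1 − t(ξ)^l)^l with t(ξ) = (ξ + 1 − 2σ)/(2(1 − 2σ)) for −1+2σ ≤ ξ ≤ 1−2σ, and Q̂(ξ) = 0 for ξ ≥ 1−2σ, is continuously differentiable on all of ℝ, and its derivative satisfies |Q̂′(ξ)| ≤ l² / (2(1 − 2σ)) for every ξ ∈ ℝ. -/
/-!
With `t` the affine change of variable, `Q̂ = P ∘ clamp ∘ t`, where `P(s) = (1 - sˡ)ˡ` and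
`clamp s = max 0 (min 1 s)`. For `l ≥ 2` the derivative `P'(s) = -l² sˡ⁻¹ (1 - sˡ)ˡ⁻¹` vanishes at
`s = 0` and `s = 1`; as `clamp` is 1-Lipschitz, `P ∘ clamp` is then differentiable at every point,
with the continuous derivative `P' ∘ clamp`. On `[0, 1]` the factors `sˡ⁻¹` and `(1 - sˡ)ˡ⁻¹` lie
in `[0, 1]`, so `|P'| ≤ l²`, and the chain rule through `t` contributes the factor `1 / (2(1 - 2σ))`.
-/

open Set Filter Topology Asymptotics
open scoped NNReal

section Clamp

variable {F : Type*} [NormedAddCommGroup F]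

theorem HasDerivAt.comp_lipschitzWith_of_deriv_eq_zero {𝕜 : Type*} [NontriviallyNormedField 𝕜]
    [NormedSpace 𝕜 F] {f : 𝕜 → F} {c : 𝕜 → 𝕜} {K : ℝ≥0}
    {x : 𝕜} (hf : HasDerivAt f 0 (c x)) (hc : LipschitzWith K c) :
    HasDerivAt (f ∘ c) 0 x := by
  have hfo : (fun y => f y - f (c x)) =o[𝓝 (c x)] fun y => y - c x := by
    simpa using hf.isLittleO
  have hco : (fun y => c y - c x) =O[𝓝 x] fun y => y - x :=
    IsBigO.of_bound K (Eventually.of_forall fun y => by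
      simpa [dist_eq_norm] using hc.dist_le_mul y x)
  refine HasDerivAt.of_isLittleO ?_
  simp only [smul_zero, sub_zero, Function.comp_apply]
  exact (hfo.comp_tendsto (hc.continuous.tendsto x)).trans_isBigO hco

theorem hasDerivAt_comp_max_min [NormedSpace ℝ F] {f f' : ℝ → F} {a b : ℝ} (hab : a ≤ b)
    (hf : ∀ y ∈ Icc a b, HasDerivAt f (f' y) y) (ha : f' a = 0) (hb : f' b = 0) (x : ℝ) :
    HasDerivAt (fun y => f (max a (min b y))) (f' (max a (min b x))) x := by
  by_cases hx : x ∈ Ioo a b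
  · have hclamp : ∀ y ∈ Ioo a b, max a (min b y) = y := fun y hy => by
      rw [min_eq_right hy.2.le, max_eq_right hy.1.le]
    rw [hclamp x hx]
    refine (hf x (Ioo_subset_Icc_self hx)).congr_of_eventuallyEq ?_
    filter_upwards [Ioo_mem_nhds hx.1 hx.2] with y hy using congrArg f (hclamp y hy)
  · have hend : max a (min b x) = a ∨ max a (min b x) = b := by
      rcases le_or_gt x a with hxa | hxa
      · exact Or.inl (max_eq_left ((min_le_right b x).trans hxa))
      · have hbx : b ≤ x := not_lt.1 fun hxb => hx ⟨hxa, hxb⟩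
        exact Or.inr (by rw [min_eq_left hbx, max_eq_right hab])
    have hzero : f' (max a (min b x)) = 0 := by rcases hend with h | h <;> rw [h] <;> assumption
    have hmem : max a (min b x) ∈ Icc a b := ⟨le_max_left _ _, max_le hab (min_le_left _ _)⟩
    have hf0 : HasDerivAt f 0 (max a (min b x)) := hzero ▸ hf _ hmem
    rw [hzero]
    exact hf0.comp_lipschitzWith_of_deriv_eq_zero (c := fun y => max a (min b y))
      ((LipschitzWith.id.const_min b).const_max a)

end Clamp

section FlatTopProfile

variable {l : ℕ}

def flatTopProfile (l : ℕ) (s : ℝ) : ℝ := (1 - s ^ l) ^ l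

def flatTopProfileDeriv (l : ℕ) (s : ℝ) : ℝ := -((l : ℝ) ^ 2 * s ^ (l - 1) * (1 - s ^ l) ^ (l - 1))

theorem hasDerivAt_flatTopProfile (l : ℕ) (s : ℝ) :
    HasDerivAt (flatTopProfile l) (flatTopProfileDeriv l s) s := by
  refine (((hasDerivAt_pow l s).const_sub 1).fun_pow l).congr_deriv ?_
  rw [flatTopProfileDeriv]
  ring

theorem continuous_flatTopProfileDeriv (l : ℕ) : Continuous (flatTopProfileDeriv l) := by
  unfold flatTopProfileDeriv
  fun_prop

theorem flatTopProfileDeriv_zero (hl : 2 ≤ l) : flatTopProfileDeriv l 0 = 0 := by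
  simp [flatTopProfileDeriv, zero_pow (show l - 1 ≠ 0 by omega)]

theorem flatTopProfileDeriv_one (hl : 2 ≤ l) : flatTopProfileDeriv l 1 = 0 := by
  simp [flatTopProfileDeriv, zero_pow (show l - 1 ≠ 0 by omega)]

theorem abs_flatTopProfileDeriv_le {s : ℝ} (hs : s ∈ Icc 0 1) :
    |flatTopProfileDeriv l s| ≤ (l : ℝ) ^ 2 := by
  obtain ⟨hs0, hs1⟩ := hs
  have hpow0 : 0 ≤ s ^ l := pow_nonneg hs0 l
  have hpow1 : s ^ l ≤ 1 := pow_le_one₀ hs0 hs1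
  have hA0 : 0 ≤ s ^ (l - 1) := pow_nonneg hs0 _
  have hA1 : s ^ (l - 1) ≤ 1 := pow_le_one₀ hs0 hs1
  have hB0 : 0 ≤ (1 - s ^ l) ^ (l - 1) := pow_nonneg (by linarith) _
  have hB1 : (1 - s ^ l) ^ (l - 1) ≤ 1 := pow_le_one₀ (by linarith) (by linarith)
  rw [flatTopProfileDeriv, abs_neg, abs_of_nonneg (by positivity), mul_assoc]
  exact mul_le_of_le_one_right (by positivity) (mul_le_one₀ hA1 hB0 hB1)

theorem flatTopProfile_max_min (hl : l ≠ 0) (s : ℝ) :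
    flatTopProfile l (max 0 (min 1 s)) =
      if s ≤ 0 then 1 else if s ≤ 1 then flatTopProfile l s else 0 := by
  split_ifs with h0 h1
  · simp [flatTopProfile, max_eq_left ((min_le_right 1 s).trans h0), zero_pow hl]
  · rw [min_eq_right h1, max_eq_right (not_le.1 h0).le]
  · simp [flatTopProfile, min_eq_left (not_le.1 h1).le, zero_pow hl]

theorem hasDerivAt_flatTopProfile_max_min (hl : 2 ≤ l) (s : ℝ) :
    HasDerivAt (fun s => flatTopProfile l (max 0 (min 1 s)))
      (flatTopProfileDeriv l (max 0 (min 1 s))) s :=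
  hasDerivAt_comp_max_min zero_le_one (fun y _ => hasDerivAt_flatTopProfile l y)
    (flatTopProfileDeriv_zero hl) (flatTopProfileDeriv_one hl) s

end FlatTopProfile

theorem flat_top_extension_C1_general (σ : ℝ) (hσ : σ < 1 / 2)
    (l : ℕ) (hl : 2 ≤ l)
    (t : ℝ → ℝ) (ht : ∀ ξ, t ξ = (ξ + 1 - 2 * σ) / (2 * (1 - 2 * σ)))
    (Qhat : ℝ → ℝ)
    (hQ : ∀ ξ, Qhat ξ =
      if ξ ≤ -1 + 2 * σ then 1
      else if ξ ≤ 1 - 2 * σ then (1 - (t ξ) ^ l) ^ l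
      else 0) :
    ContDiff ℝ 1 Qhat ∧
    ∀ ξ : ℝ, |deriv Qhat ξ| ≤ (l : ℝ) ^ 2 / (2 * (1 - 2 * σ)) := by
  set c := 2 * (1 - 2 * σ)
  have hc : 0 < c := by linarith
  have hleft : ∀ ξ, ξ ≤ -1 + 2 * σ ↔ t ξ ≤ 0 := fun ξ => by
    rw [ht, div_le_iff₀ hc]; constructor <;> intro <;> linarith
  have hright : ∀ ξ, ξ ≤ 1 - 2 * σ ↔ t ξ ≤ 1 := fun ξ => by
    rw [ht, div_le_iff₀ hc]; constructor <;> intro <;> linarith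
  have hQt : Qhat = fun ξ => flatTopProfile l (max 0 (min 1 (t ξ))) := by
    funext ξ
    rw [flatTopProfile_max_min (by omega), hQ]
    simp only [hleft, hright, flatTopProfile]
  obtain rfl : t = fun ξ => (ξ + 1 - 2 * σ) / c := funext ht
  have hQd : ∀ ξ, HasDerivAt Qhat
      (flatTopProfileDeriv l (max 0 (min 1 ((ξ + 1 - 2 * σ) / c))) * (1 / c)) ξ := fun ξ =>
    hQt ▸ (hasDerivAt_flatTopProfile_max_min hl _).comp ξ
      ((((hasDerivAt_id ξ).add_const 1).sub_const (2 * σ)).div_const c)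
  have hderiv : deriv Qhat = fun ξ =>
      flatTopProfileDeriv l (max 0 (min 1 ((ξ + 1 - 2 * σ) / c))) * (1 / c) :=
    funext fun ξ => (hQd ξ).deriv
  refine ⟨contDiff_one_iff_deriv.2 ⟨fun ξ => (hQd ξ).differentiableAt, ?_⟩, fun ξ => ?_⟩
  · rw [hderiv]
    have hP' := continuous_flatTopProfileDeriv l
    fun_prop
  · rw [hderiv, abs_mul, abs_of_pos (one_div_pos.2 hc), ← div_eq_mul_one_div]
    exact div_le_div_of_nonneg_right (abs_flatTopProfileDeriv_le
      ⟨le_max_left _ _, max_le zero_le_one (min_le_left _ _)⟩) hc.le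

/-- For `0 ≤ σ < 1/2` and an integer `l ≥ 2`, the extension `Q̂` of
the flat-top function to `ℝ` (by the constant `1` to the left and `0` to the right)
is continuously differentiable on `ℝ` and its derivative satisfies
`|Q̂′(ξ)| ≤ l² / (2(1 − 2σ))` for every `ξ`. -/
theorem flat_top_extension_C1 (σ : ℝ) (hσ0 : 0 ≤ σ) (hσ : σ < 1 / 2)
    (l : ℕ) (hl : 2 ≤ l)
    (t : ℝ → ℝ) (ht : ∀ ξ, t ξ = (ξ + 1 - 2 * σ) / (2 * (1 - 2 * σ)))
    (Qhat : ℝ → ℝ)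
    (hQ : ∀ ξ, Qhat ξ =
      if ξ ≤ -1 + 2 * σ then 1
      else if ξ ≤ 1 - 2 * σ then (1 - (t ξ) ^ l) ^ l
      else 0) :
    ContDiff ℝ 1 Qhat ∧
    ∀ ξ : ℝ, |deriv Qhat ξ| ≤ (l : ℝ) ^ 2 / (2 * (1 - 2 * σ)) :=
  flat_top_extension_C1_general σ hσ l hl t ht Qhat hQ
end

section
/- (Optimal-order convergence of the CGFEM.) Let the CGFEM setup hold with 0 < h ≤ 1, let k ∈ ℕ, M > 0, C₃, C₄, C_m, C_N > 0, let u : ℝ^d → ℝ be differentiable, and for each i ∈ I let η_i : ℝ^d → ℝ be differentiable with the local reproducing property Σ_{l∈I_i} η_i(x_{i,l}) ξ̃ᵢˡ(x) = η_i(x) for all x ∈ Ω. Assume: (i) the Lebesgue measure of Ω ∩ ω_i is at most C_m h^d for every i; (ii) the number of indices satisfies |I| ≤ C_N h^{−d}; (iii) for every i ∈ I and every x ∈ Ω ∩ ω_i one has |u(x) − η_i(x)| ≤ M h^{k+1} and ‖D(u − η_i)(x)‖ ≤ M h^k; (iv) |u(x_{i,l}) − η_i(x_{i,l})| ≤ M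 h^{k+1} for every i ∈ I and l ∈ I_i; and (v) for every i ∈ I, l ∈ I_i, and x ∈ Ω ∩ ω_i one has |ξ̃ᵢˡ(x)| ≤ C₃ and ‖Dξ̃ᵢˡ(x)‖ ≤ C₄ h⁻¹. Then there is a constant C depending only on κ, κ′, C₁, C₂, C₃, C₄, C_m, C_N (and not on h, M, u, or the η_i) such that ∫_Ω ‖D(u − V_h u)(x)‖² dx ≤ C M² h^{2k}; one may take C = 4κ C_N C_m (C₁² + C₂² + κ′² (C₂² C₃² + C₁² C₄²)). -/
/-!
On `Ω` the partition of unity gives `u - V_h u = ∑ᵢ Nᵢ (u - Sᵢ)`, where `Sᵢ = ∑ₗ u(x_{i,l}) ξ̃ᵢˡ`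
is the interpolant on patch `i`. The reproducing property rewrites `u - Sᵢ` as
`(u - ηᵢ) + ∑ₗ (ηᵢ - u)(x_{i,l}) ξ̃ᵢˡ`, so on `ω_i` one has `|u - Sᵢ| = O(M h^{k+1})` and
`‖D(u - Sᵢ)‖ = O(M h^k)`; in the product rule for `D(Nᵢ (u - Sᵢ))` the factor `h⁻¹` of `‖DNᵢ‖`
is absorbed by the extra power of `h` in `|u - Sᵢ|`. At each point at most `κ` patch terms are
nonzero, so by Cauchy–Schwarz `‖D(u - V_h u)‖²` is at most `κ` times the sum of the patch bounds
over the patches containing the point. Integrating, each patch contributes measure `C_m h^d` and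
there are at most `C_N h^{-d}` patches.
-/

open MeasureTheory

theorem norm_sum_smul_le_card_mul {Λ F : Type*} [SeminormedAddCommGroup F] [NormedSpace ℝ F]
    {s : Finset Λ} {n : ℕ} (hs : s.card ≤ n) {a : Λ → ℝ} {v : Λ → F} {A B : ℝ}
    (hA : 0 ≤ A) (hB : 0 ≤ B) (ha : ∀ l ∈ s, |a l| ≤ A) (hv : ∀ l ∈ s, ‖v l‖ ≤ B) :
    ‖∑ l ∈ s, a l • v l‖ ≤ n * (A * B) :=
  calc ‖∑ l ∈ s, a l • v l‖ ≤ ∑ l ∈ s, A * B :=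
        norm_sum_le_of_le s fun l hl => by
          rw [norm_smul, Real.norm_eq_abs]
          exact mul_le_mul (ha l hl) (hv l hl) (norm_nonneg _) hA
    _ = s.card * (A * B) := by rw [Finset.sum_const, nsmul_eq_mul]
    _ ≤ n * (A * B) := by gcongr

theorem norm_sum_sq_le_of_overlap {ι α F : Type*} [Fintype ι] [SeminormedAddCommGroup F]
    {f : ι → F} {ω : ι → Set α} {x : α} {κ : ℕ} {K : ℝ}
    (hκ : {i | x ∈ ω i}.ncard ≤ κ) (hf : ∀ i, x ∉ ω i → f i = 0)
    (hK : ∀ i, x ∈ ω i → ‖f i‖ ^ 2 ≤ K) :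
    ‖∑ i, f i‖ ^ 2 ≤ κ * ∑ i, (ω i).indicator (fun _ => K) x := by
  classical
  set t := Finset.univ.filter fun i => x ∈ ω i
  have ht : (t.card : ℝ) ≤ κ := by
    rw [← Set.ncard_coe_finset]
    simp only [t, Finset.coe_filter, Finset.mem_univ, true_and]
    exact_mod_cast hκ
  rw [← Finset.sum_subset (Finset.subset_univ t) fun i _ hi => hf i (by simpa [t] using hi)]
  calc ‖∑ i ∈ t, f i‖ ^ 2 ≤ (∑ i ∈ t, ‖f i‖) ^ 2 := by gcongr; exact norm_sum_le _ _
    _ ≤ t.card * ∑ i ∈ t, ‖f i‖ ^ 2 := sq_sum_le_card_mul_sum_sq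
    _ ≤ κ * ∑ i ∈ t, K := by
        gcongr with i hi
        exact hK i (by simpa [t] using hi)
    _ = κ * ∑ i, (ω i).indicator (fun _ => K) x := by
        simp only [t, Finset.sum_filter, Set.indicator_apply]

theorem setIntegral_le_of_le_sum_indicator {α ι : Type*} [MeasurableSpace α] [Fintype ι]
    {μ : Measure α} {Ω : Set α} (hΩ : MeasurableSet Ω) {ω : ι → Set α}
    (hω : ∀ i, MeasurableSet (ω i)) {g : α → ℝ} {c K V : ℝ} (hc : 0 ≤ c) (hK : 0 ≤ K)
    (hV : 0 ≤ V) (hvol : ∀ i, μ (Ω ∩ ω i) ≤ ENNReal.ofReal V) (hg₀ : ∀ x ∈ Ω, 0 ≤ g x)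
    (hg : ∀ x ∈ Ω, g x ≤ c * ∑ i, (ω i).indicator (fun _ => K) x) :
    ∫ x in Ω, g x ∂μ ≤ c * (Fintype.card ι * (K * V)) := by
  have hvolV : ∀ i, μ.real (ω i ∩ Ω) ≤ V := fun i => by
    rw [Set.inter_comm]; exact ENNReal.toReal_le_of_le_ofReal hV (hvol i)
  have hint : ∀ i, Integrable ((ω i).indicator fun _ => K) (μ.restrict Ω) := fun i =>
    (integrable_indicator_iff (hω i)).2 <| integrableOn_const <| by
      rw [Measure.restrict_apply (hω i), Set.inter_comm]
      exact ((hvol i).trans_lt ENNReal.ofReal_lt_top).ne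
  calc ∫ x in Ω, g x ∂μ ≤ ∫ x in Ω, c * ∑ i, (ω i).indicator (fun _ => K) x ∂μ :=
        integral_mono_of_nonneg (ae_restrict_of_forall_mem hΩ hg₀)
          ((integrable_finsetSum _ fun i _ => hint i).const_mul c)
          (ae_restrict_of_forall_mem hΩ hg)
    _ = c * ∑ i, μ.real (ω i ∩ Ω) * K := by
        rw [integral_const_mul, integral_finsetSum _ fun i _ => hint i]
        refine congrArg _ (Finset.sum_congr rfl fun i _ => ?_)
        rw [integral_indicator_const K (hω i), measureReal_restrict_apply (hω i), smul_eq_mul]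
    _ ≤ c * ∑ _i : ι, V * K := by gcongr with i; exact hvolV i
    _ = c * (Fintype.card ι * (K * V)) := by
        rw [Finset.sum_const, nsmul_eq_mul, Finset.card_univ, mul_comm V]

section

variable {E : Type*} [NormedAddCommGroup E] [NormedSpace ℝ E]

theorem norm_fderiv_mul_le {f g : E → ℝ} {x : E} (hf : DifferentiableAt ℝ f x)
    (hg : DifferentiableAt ℝ g x) :
    ‖fderiv ℝ (fun y => f y * g y) x‖ ≤ |f x| * ‖fderiv ℝ g x‖ + |g x| * ‖fderiv ℝ f x‖ := by
  rw [fderiv_fun_mul hf hg]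
  refine (norm_add_le _ _).trans_eq ?_
  rw [norm_smul, norm_smul, Real.norm_eq_abs, Real.norm_eq_abs]

theorem fderiv_mul_eq_zero_of_eq_zero {f g : E → ℝ} {x : E} (hf : DifferentiableAt ℝ f x)
    (hg : DifferentiableAt ℝ g x) (hfx : f x = 0) (hf'x : fderiv ℝ f x = 0) :
    fderiv ℝ (fun y => f y * g y) x = 0 := by
  rw [fderiv_fun_mul hf hg, hfx, hf'x, zero_smul, smul_zero, add_zero]

theorem fderiv_sub_sum_mul_eq_sum_fderiv {ι : Type*} [Fintype ι] {U : Set E} (hU : IsOpen U)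
    {x : E} (hx : x ∈ U) {N S : ι → E → ℝ} {u : E → ℝ} (hPU : ∀ y ∈ U, ∑ i, N i y = 1)
    (hN : ∀ i, DifferentiableAt ℝ (N i) x) (hu : DifferentiableAt ℝ u x)
    (hS : ∀ i, DifferentiableAt ℝ (S i) x) :
    fderiv ℝ (fun y => u y - ∑ i, N i y * S i y) x =
      ∑ i, fderiv ℝ (fun y => N i y * (u y - S i y)) x := by
  have hloc : (fun y => u y - ∑ i, N i y * S i y) =ᶠ[nhds x]
      fun y => ∑ i, N i y * (u y - S i y) :=
    Filter.eventually_of_mem (hU.mem_nhds hx) fun y hy => by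
      simp only [mul_sub, Finset.sum_sub_distrib, ← Finset.sum_mul, hPU y hy, one_mul]
  rw [hloc.fderiv_eq, fderiv_fun_sum fun i _ => (hN i).fun_mul (hu.fun_sub (hS i))]

end

section patchInterpolant

variable {E Λ : Type*}

def patchInterpolant (s : Finset Λ) (p : Λ → E) (ξ : Λ → E → ℝ) (u : E → ℝ) (x : E) : ℝ :=
  ∑ l ∈ s, u (p l) * ξ l x

variable {s : Finset Λ} {p : Λ → E} {ξ : Λ → E → ℝ} {u η : E → ℝ}

theorem sub_patchInterpolant_eq {y : E} (hrep : ∑ l ∈ s, η (p l) * ξ l y = η y) :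
    u y - patchInterpolant s p ξ u y = (u y - η y) + ∑ l ∈ s, (η (p l) - u (p l)) * ξ l y := by
  rw [patchInterpolant, Finset.sum_congr rfl fun l _ => sub_mul .., Finset.sum_sub_distrib,
    hrep]
  ring

theorem abs_sub_patchInterpolant_le {x : E} {n : ℕ} {ε C : ℝ} (hs : s.card ≤ n) (hC : 0 ≤ C)
    (hrep : ∑ l ∈ s, η (p l) * ξ l x = η x) (hux : |u x - η x| ≤ ε)
    (hup : ∀ l ∈ s, |u (p l) - η (p l)| ≤ ε) (hξ : ∀ l ∈ s, |ξ l x| ≤ C) :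
    |u x - patchInterpolant s p ξ u x| ≤ ε + n * (ε * C) := by
  have hsum : ‖∑ l ∈ s, (η (p l) - u (p l)) • ξ l x‖ ≤ n * (ε * C) :=
    norm_sum_smul_le_card_mul hs ((abs_nonneg _).trans hux) hC
      (fun l hl => abs_sub_comm (u (p l)) _ ▸ hup l hl) hξ
  rw [sub_patchInterpolant_eq hrep]
  exact (abs_add_le _ _).trans (add_le_add hux hsum)

variable [NormedAddCommGroup E] [NormedSpace ℝ E]

theorem differentiableAt_patchInterpolant {x : E} (hξ : ∀ l ∈ s, DifferentiableAt ℝ (ξ l) x) :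
    DifferentiableAt ℝ (patchInterpolant s p ξ u) x :=
  DifferentiableAt.fun_sum fun l hl => (hξ l hl).const_mul _

theorem norm_fderiv_sub_patchInterpolant_le {U : Set E} (hU : IsOpen U) {x : E} (hx : x ∈ U)
    (hu : DifferentiableAt ℝ u x) (hη : DifferentiableAt ℝ η x)
    (hξd : ∀ l ∈ s, DifferentiableAt ℝ (ξ l) x)
    (hrep : ∀ y ∈ U, ∑ l ∈ s, η (p l) * ξ l y = η y) {n : ℕ} {ε ε' C' : ℝ} (hs : s.card ≤ n)
    (hε : 0 ≤ ε) (hC' : 0 ≤ C') (hux : ‖fderiv ℝ (fun y => u y - η y) x‖ ≤ ε')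
    (hup : ∀ l ∈ s, |u (p l) - η (p l)| ≤ ε) (hξ : ∀ l ∈ s, ‖fderiv ℝ (ξ l) x‖ ≤ C') :
    ‖fderiv ℝ (fun y => u y - patchInterpolant s p ξ u y) x‖ ≤ ε' + n * (ε * C') := by
  have hloc : (fun y => u y - patchInterpolant s p ξ u y) =ᶠ[nhds x]
      fun y => (u y - η y) + ∑ l ∈ s, (η (p l) - u (p l)) * ξ l y :=
    Filter.eventually_of_mem (hU.mem_nhds hx) fun y hy => sub_patchInterpolant_eq (hrep y hy)
  have hR : fderiv ℝ (fun y => ∑ l ∈ s, (η (p l) - u (p l)) * ξ l y) x =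
      ∑ l ∈ s, (η (p l) - u (p l)) • fderiv ℝ (ξ l) x := by
    rw [fderiv_fun_sum fun l hl => (hξd l hl).const_mul _]
    exact Finset.sum_congr rfl fun l hl => fderiv_const_mul (hξd l hl) _
  rw [hloc.fderiv_eq, fderiv_fun_add (hu.fun_sub hη)
    (DifferentiableAt.fun_sum fun l hl => (hξd l hl).const_mul _), hR]
  exact (norm_add_le _ _).trans <| add_le_add hux <| norm_sum_smul_le_card_mul hs hε hC'
    (fun l hl => abs_sub_comm (u (p l)) _ ▸ hup l hl) hξ

theorem sq_norm_fderiv_mul_sub_patchInterpolant_le {N : E → ℝ} {U : Set E} (hU : IsOpen U)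
    {x : E} (hx : x ∈ U) (hN : DifferentiableAt ℝ N x) (hu : DifferentiableAt ℝ u x)
    (hη : DifferentiableAt ℝ η x) (hξd : ∀ l ∈ s, DifferentiableAt ℝ (ξ l) x)
    (hrep : ∀ y ∈ U, ∑ l ∈ s, η (p l) * ξ l y = η y)
    {h M C₁ C₂ C₃ C₄ : ℝ} {k n : ℕ} (hh : 0 < h) (hC₃ : 0 ≤ C₃) (hC₄ : 0 ≤ C₄)
    (hs : s.card ≤ n) (hNx : |N x| ≤ C₁) (hDNx : ‖fderiv ℝ N x‖ ≤ C₂ / h)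
    (hux : |u x - η x| ≤ M * h ^ (k + 1))
    (hDux : ‖fderiv ℝ (fun y => u y - η y) x‖ ≤ M * h ^ k)
    (hup : ∀ l ∈ s, |u (p l) - η (p l)| ≤ M * h ^ (k + 1))
    (hξ : ∀ l ∈ s, |ξ l x| ≤ C₃) (hDξ : ∀ l ∈ s, ‖fderiv ℝ (ξ l) x‖ ≤ C₄ / h) :
    ‖fderiv ℝ (fun y => N y * (u y - patchInterpolant s p ξ u y)) x‖ ^ 2 ≤
      4 * (C₁ ^ 2 + C₂ ^ 2 + (n : ℝ) ^ 2 * (C₂ ^ 2 * C₃ ^ 2 + C₁ ^ 2 * C₄ ^ 2)) *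
        M ^ 2 * h ^ (2 * k) := by
  have hε : 0 ≤ M * h ^ (k + 1) := (abs_nonneg _).trans hux
  have hC₁ : 0 ≤ C₁ := (abs_nonneg _).trans hNx
  have hval := abs_sub_patchInterpolant_le hs hC₃ (hrep x hx) hux hup hξ
  have hder := norm_fderiv_sub_patchInterpolant_le hU hx hu hη hξd hrep hs hε
    (div_nonneg hC₄ hh.le) hDux hup hDξ
  set c := n * C₁ * C₄
  set e := n * C₂ * C₃
  have hbound : ‖fderiv ℝ (fun y => N y * (u y - patchInterpolant s p ξ u y)) x‖ ≤
      M * h ^ k * (C₁ + C₂ + c + e) :=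
    calc _ ≤ |N x| * ‖fderiv ℝ (fun y => u y - patchInterpolant s p ξ u y) x‖ +
          |u x - patchInterpolant s p ξ u x| * ‖fderiv ℝ N x‖ :=
          norm_fderiv_mul_le hN (hu.fun_sub (differentiableAt_patchInterpolant hξd))
      _ ≤ C₁ * (M * h ^ k + n * (M * h ^ (k + 1) * (C₄ / h))) +
          (M * h ^ (k + 1) + n * (M * h ^ (k + 1) * C₃)) * (C₂ / h) := by
          gcongr
      _ = M * h ^ k * (C₁ + C₂ + c + e) := by field_simp; ring
  calc _ ≤ (M * h ^ k * (C₁ + C₂ + c + e)) ^ 2 := by gcongr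
    _ = M ^ 2 * h ^ (2 * k) * (C₁ + C₂ + c + e) ^ 2 := by ring
    _ ≤ M ^ 2 * h ^ (2 * k) * (4 * (C₁ ^ 2 + C₂ ^ 2 + c ^ 2 + e ^ 2)) := by
        gcongr
        nlinarith [sq_nonneg (C₁ - C₂), sq_nonneg (C₁ - c), sq_nonneg (C₁ - e),
          sq_nonneg (C₂ - c), sq_nonneg (C₂ - e), sq_nonneg (c - e)]
    _ = _ := by ring

end patchInterpolant

theorem cgfem_optimal_convergence_general {d : ℕ} {ι Λ : Type*} [Fintype ι]
    (Ω : Set (EuclideanSpace ℝ (Fin d))) (hΩ : IsOpen Ω)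
    (h C₁ C₂ : ℝ) (hh : 0 < h)
    (κ κ' : ℕ)
    (N : ι → EuclideanSpace ℝ (Fin d) → ℝ)
    (hNdiff : ∀ i, Differentiable ℝ (N i))
    (hPU : ∀ x ∈ Ω, ∑ i, N i x = 1)
    (ω : ι → Set (EuclideanSpace ℝ (Fin d)))
    (hωmeas : ∀ i, MeasurableSet (ω i))
    (hsupp : ∀ i, ∀ x ∉ ω i, N i x = 0 ∧ fderiv ℝ (N i) x = 0)
    (hNbd : ∀ i x, |N i x| ≤ C₁)
    (hDNbd : ∀ i x, ‖fderiv ℝ (N i) x‖ ≤ C₂ / h)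
    (hoverlap : ∀ x ∈ Ω, ({i | x ∈ ω i} : Set ι).ncard ≤ κ)
    (Ii : ι → Finset Λ) (hIi : ∀ i, (Ii i).card ≤ κ')
    (pts : ι → Λ → EuclideanSpace ℝ (Fin d))
    (ξt : ι → Λ → EuclideanSpace ℝ (Fin d) → ℝ)
    (hξt : ∀ i l, Differentiable ℝ (ξt i l))
    (k : ℕ) (M C₃ C₄ Cm CN : ℝ)
    (hC₃ : 0 < C₃) (hC₄ : 0 < C₄) (hCm : 0 < Cm)
    (u : EuclideanSpace ℝ (Fin d) → ℝ) (hu : Differentiable ℝ u)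
    (η : ι → EuclideanSpace ℝ (Fin d) → ℝ) (hη : ∀ i, Differentiable ℝ (η i))
    (hrep : ∀ i, ∀ x ∈ Ω, ∑ l ∈ Ii i, η i (pts i l) * ξt i l x = η i x)
    (hmeasure : ∀ i, volume (Ω ∩ ω i) ≤ ENNReal.ofReal (Cm * h ^ d))
    (hcard : (Fintype.card ι : ℝ) ≤ CN / h ^ d)
    (happrox0 : ∀ i, ∀ x ∈ Ω ∩ ω i, |u x - η i x| ≤ M * h ^ (k + 1))
    (happrox1 : ∀ i, ∀ x ∈ Ω ∩ ω i,
      ‖fderiv ℝ (fun y => u y - η i y) x‖ ≤ M * h ^ k)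
    (happroxpts : ∀ i, ∀ l ∈ Ii i, |u (pts i l) - η i (pts i l)| ≤ M * h ^ (k + 1))
    (hξtbd : ∀ i, ∀ l ∈ Ii i, ∀ x ∈ Ω ∩ ω i, |ξt i l x| ≤ C₃)
    (hDξtbd : ∀ i, ∀ l ∈ Ii i, ∀ x ∈ Ω ∩ ω i, ‖fderiv ℝ (ξt i l) x‖ ≤ C₄ / h)
    (Vh : EuclideanSpace ℝ (Fin d) → ℝ)
    (hVh : ∀ x, Vh x = ∑ i, N i x * ∑ l ∈ Ii i, u (pts i l) * ξt i l x) :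
    ∫ x in Ω, ‖fderiv ℝ (fun y => u y - Vh y) x‖ ^ 2 ≤
      4 * (κ : ℝ) * CN * Cm *
        (C₁ ^ 2 + C₂ ^ 2 + (κ' : ℝ) ^ 2 * (C₂ ^ 2 * C₃ ^ 2 + C₁ ^ 2 * C₄ ^ 2)) *
        M ^ 2 * h ^ (2 * k) := by
  set S := fun i => patchInterpolant (Ii i) (pts i) (ξt i) u
  obtain rfl : Vh = fun x => ∑ i, N i x * S i x := funext hVh
  have hS : ∀ i x, DifferentiableAt ℝ (S i) x := fun i x =>
    differentiableAt_patchInterpolant fun l _ => hξt i l x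
  set K := 4 * (C₁ ^ 2 + C₂ ^ 2 + (κ' : ℝ) ^ 2 * (C₂ ^ 2 * C₃ ^ 2 + C₁ ^ 2 * C₄ ^ 2)) *
    M ^ 2 * h ^ (2 * k)
  have hpatch : ∀ i, ∀ x ∈ Ω ∩ ω i, ‖fderiv ℝ (fun y => N i y * (u y - S i y)) x‖ ^ 2 ≤ K :=
    fun i x hx => sq_norm_fderiv_mul_sub_patchInterpolant_le hΩ hx.1 (hNdiff i x) (hu x)
      (hη i x) (fun l _ => hξt i l x) (hrep i) hh hC₃.le hC₄.le (hIi i) (hNbd i x)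
      (hDNbd i x) (happrox0 i x hx) (happrox1 i x hx) (happroxpts i)
      (fun l hl => hξtbd i l hl x hx) (fun l hl => hDξtbd i l hl x hx)
  have hpoint : ∀ x ∈ Ω, ‖fderiv ℝ (fun y => u y - ∑ i, N i y * S i y) x‖ ^ 2 ≤
      κ * ∑ i, (ω i).indicator (fun _ => K) x := fun x hx => by
    rw [fderiv_sub_sum_mul_eq_sum_fderiv hΩ hx hPU (fun i => hNdiff i x) (hu x) (hS · x)]
    exact norm_sum_sq_le_of_overlap (hoverlap x hx)
      (fun i hxi => fderiv_mul_eq_zero_of_eq_zero (hNdiff i x) ((hu x).sub (hS i x))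
        (hsupp i x hxi).1 (hsupp i x hxi).2)
      (fun i hxi => hpatch i x ⟨hx, hxi⟩)
  have hK : 0 ≤ K := by positivity
  calc _ ≤ κ * (Fintype.card ι * (K * (Cm * h ^ d))) :=
        setIntegral_le_of_le_sum_indicator hΩ.measurableSet hωmeas (Nat.cast_nonneg _) hK
          (by positivity) hmeasure (fun _ _ => sq_nonneg _) hpoint
    _ ≤ κ * (CN / h ^ d * (K * (Cm * h ^ d))) := by gcongr
    _ = _ := by field_simp; ring

/-- Optimal-order convergence of the CGFEM. Under the CGFEM setup
with `0 < h ≤ 1`, local approximation errors of order `M h^{k+1}` (values) and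
`M h^k` (derivatives), the local reproducing property, bounded least-squares basis
functions (`|ξ̃ᵢˡ| ≤ C₃`, `‖Dξ̃ᵢˡ‖ ≤ C₄ h⁻¹`), patch measures `≤ C_m h^d` and
`|I| ≤ C_N h^{−d}`, one has
`∫_Ω ‖D(u − V_h u)‖² ≤ C M² h^{2k}` with
`C = 4κ C_N C_m (C₁² + C₂² + κ′² (C₂² C₃² + C₁² C₄²))`. -/
theorem cgfem_optimal_convergence {d : ℕ} {ι Λ : Type*} [Fintype ι]
    (Ω : Set (EuclideanSpace ℝ (Fin d))) (hΩ : IsOpen Ω)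
    (h C₁ C₂ : ℝ) (hh : 0 < h) (hh1 : h ≤ 1) (hC₁ : 0 < C₁) (hC₂ : 0 < C₂)
    (κ κ' : ℕ) (hκ : 0 < κ) (hκ' : 0 < κ')
    (N : ι → EuclideanSpace ℝ (Fin d) → ℝ)
    (hNdiff : ∀ i, Differentiable ℝ (N i))
    (hPU : ∀ x ∈ Ω, ∑ i, N i x = 1)
    (ω : ι → Set (EuclideanSpace ℝ (Fin d)))
    (hωmeas : ∀ i, MeasurableSet (ω i))
    (hsupp : ∀ i, ∀ x ∉ ω i, N i x = 0 ∧ fderiv ℝ (N i) x = 0)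
    (hNbd : ∀ i x, |N i x| ≤ C₁)
    (hDNbd : ∀ i x, ‖fderiv ℝ (N i) x‖ ≤ C₂ / h)
    (hoverlap : ∀ x ∈ Ω, ({i | x ∈ ω i} : Set ι).ncard ≤ κ)
    (Ii : ι → Finset Λ) (hIi : ∀ i, (Ii i).card ≤ κ')
    (pts : ι → Λ → EuclideanSpace ℝ (Fin d))
    (ξt : ι → Λ → EuclideanSpace ℝ (Fin d) → ℝ)
    (hξt : ∀ i l, Differentiable ℝ (ξt i l))
    (k : ℕ) (M C₃ C₄ Cm CN : ℝ)
    (hM : 0 < M) (hC₃ : 0 < C₃) (hC₄ : 0 < C₄) (hCm : 0 < Cm) (hCN : 0 < CN)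
    (u : EuclideanSpace ℝ (Fin d) → ℝ) (hu : Differentiable ℝ u)
    (η : ι → EuclideanSpace ℝ (Fin d) → ℝ) (hη : ∀ i, Differentiable ℝ (η i))
    (hrep : ∀ i, ∀ x ∈ Ω, ∑ l ∈ Ii i, η i (pts i l) * ξt i l x = η i x)
    (hmeasure : ∀ i, volume (Ω ∩ ω i) ≤ ENNReal.ofReal (Cm * h ^ d))
    (hcard : (Fintype.card ι : ℝ) ≤ CN / h ^ d)
    (happrox0 : ∀ i, ∀ x ∈ Ω ∩ ω i, |u x - η i x| ≤ M * h ^ (k + 1))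
    (happrox1 : ∀ i, ∀ x ∈ Ω ∩ ω i,
      ‖fderiv ℝ (fun y => u y - η i y) x‖ ≤ M * h ^ k)
    (happroxpts : ∀ i, ∀ l ∈ Ii i, |u (pts i l) - η i (pts i l)| ≤ M * h ^ (k + 1))
    (hξtbd : ∀ i, ∀ l ∈ Ii i, ∀ x ∈ Ω ∩ ω i, |ξt i l x| ≤ C₃)
    (hDξtbd : ∀ i, ∀ l ∈ Ii i, ∀ x ∈ Ω ∩ ω i, ‖fderiv ℝ (ξt i l) x‖ ≤ C₄ / h)
    (Vh : EuclideanSpace ℝ (Fin d) → ℝ)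
    (hVh : ∀ x, Vh x = ∑ i, N i x * ∑ l ∈ Ii i, u (pts i l) * ξt i l x) :
    ∫ x in Ω, ‖fderiv ℝ (fun y => u y - Vh y) x‖ ^ 2 ≤
      4 * (κ : ℝ) * CN * Cm *
        (C₁ ^ 2 + C₂ ^ 2 + (κ' : ℝ) ^ 2 * (C₂ ^ 2 * C₃ ^ 2 + C₁ ^ 2 * C₄ ^ 2)) *
        M ^ 2 * h ^ (2 * k) :=
  cgfem_optimal_convergence_general Ω hΩ h C₁ C₂ hh κ κ' N hNdiff hPU ω hωmeas hsupp hNbd hDNbd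
    hoverlap Ii hIi pts ξt hξt k M C₃ C₄ Cm CN hC₃ hC₄ hCm u hu η hη hrep hmeasure hcard happrox0
    happrox1 happroxpts hξtbd hDξtbd Vh hVh
end
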